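/- Let 1 ≤ μ < ω₁. If S ∈ Δ⁰_{μ+1}, then S is μth-order guessable; moreover, taking (A_i) as in Kuratowski's lemma with S = ⋃_n ⋂_{m≥n} A_m = ⋂_n ⋃_{m≥n} A_m, the guesser G(a₀,…,a_m) = a_m based on (A₀, A₁, …) guesses S. -/

import Mathlib

open Filter Topology Classical

/-- The initial segment `f↾n` of an infinite sequence. -/
def res (f : ℕ → ℕ) (n : ℕ) : List ℕ := List.ofFn (fun i : Fin n => f i)

/-- `[X]`: the set of infinite sequences all of whose finite initial segments lie in `X`. -/
def seqsIn (X : Set (List ℕ)) : Set (ℕ → ℕ) := {f | ∀ n, res f n ∈ X}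

/-- The simplified remainder `S_α`. -/
noncomputable def SRem (S : Set (ℕ → ℕ)) (α : Ordinal.{0}) : Set (List ℕ) :=
  Ordinal.limitRecOn α Set.univ
    (fun _ prev => {x | x ∈ prev ∧ ∃ f g : ℕ → ℕ,
      f ∈ seqsIn prev ∧ g ∈ seqsIn prev ∧ res f x.length = x ∧ res g x.length = x ∧
      f ∈ S ∧ g ∉ S})
    (fun _ _ ih => ⋂ (β : Ordinal.{0}) (h : β < _), ih β h)

/-- Wadge's remainder `Rm_μ(A,B)`. -/
noncomputable def Rm (A B : Set (ℕ → ℕ)) (μ : Ordinal.{0}) : Set (ℕ → ℕ) :=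
  if μ = 0 then Set.univ
  else ⋂ (ν : {ν : Ordinal.{0} // ν < μ}),
    closure (Rm A B ν.1 ∩ A) ∩ closure (Rm A B ν.1 ∩ B)
termination_by μ
decreasing_by exact ν.2

/-- The least ordinal at which the simplified remainders stabilize. -/
noncomputable def alphaS (S : Set (ℕ → ℕ)) : Ordinal.{0} :=
  sInf {α | SRem S α = SRem S (α + 1)}

/-- `S_∞`, the stable value of the simplified remainders. -/
noncomputable def Sinf (S : Set (ℕ → ℕ)) : Set (List ℕ) := SRem S (alphaS S)

/-- `β(σ)`: the least ordinal `γ` with `σ ∉ S_γ`. -/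
noncomputable def betaOf (S : Set (ℕ → ℕ)) (σ : List ℕ) : Ordinal.{0} :=
  sInf {γ | σ ∉ SRem S γ}

/-- `G` guesses `S`. -/
def Guesses (G : List ℕ → Bool) (S : Set (ℕ → ℕ)) : Prop :=
  ∀ f : ℕ → ℕ, ∀ᶠ n in atTop, (G (res f n) = true ↔ f ∈ S)

def Guessable (S : Set (ℕ → ℕ)) : Prop := ∃ G, Guesses G S

/-- `G, H` witness that `S` is guessable with `< α` mind changes. -/
def WitnessMC (S : Set (ℕ → ℕ)) (α : Ordinal.{0}) (G : List ℕ → Bool)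
    (H : List ℕ → Ordinal.{0}) : Prop :=
  Guesses G S ∧ (∀ σ, H σ < α) ∧
  (∀ (f : ℕ → ℕ) (n : ℕ), H (res f (n + 1)) ≤ H (res f n)) ∧
  (∀ (f : ℕ → ℕ) (n : ℕ), G (res f (n + 1)) ≠ G (res f n) →
    H (res f (n + 1)) < H (res f n))

def GuessableMC (S : Set (ℕ → ℕ)) (α : Ordinal.{0}) : Prop := ∃ G H, WitnessMC S α G H

/-- An ordinal is even if it is of the form `λ + n` with `λ` limit or zero and `n` even. -/
def OrdEven (o : Ordinal.{0}) : Prop :=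
  ∃ (l : Ordinal.{0}) (n : ℕ), (l = 0 ∨ Order.IsSuccLimit l) ∧ o = l + n ∧ Even n

/-- The Hausdorff difference set `D_α((A_η)_{η<α})`. -/
def DSet (α : Ordinal.{0}) (A : Ordinal.{0} → Set (ℕ → ℕ)) : Set (ℕ → ℕ) :=
  {x | ∃ η, η < α ∧ x ∈ A η ∧ (∀ η', η' < η → x ∉ A η') ∧ (OrdEven η ↔ ¬ OrdEven α)}

/-- Membership in the class `D_α(Σ⁰₁)`. -/
def InDiff (α : Ordinal.{0}) (S : Set (ℕ → ℕ)) : Prop :=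
  ∃ A : Ordinal.{0} → Set (ℕ → ℕ), (∀ η, η < α → IsOpen (A η)) ∧
    (∀ η η', η ≤ η' → η' < α → A η ⊆ A η') ∧ S = DSet α A
/-- Wadge's `Rm_Ω(S)`: the stable value of `Rm_μ(S, Sᶜ)`. -/
noncomputable def RmInf (S : Set (ℕ → ℕ)) : Set (ℕ → ℕ) :=
  Rm S Sᶜ (sInf {μ : Ordinal.{0} | Rm S Sᶜ μ = Rm S Sᶜ (μ + 1)})

/-- The canonical guesser `G_S`. -/
noncomputable def GS (S : Set (ℕ → ℕ)) (σ : List ℕ) : Bool :=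
  if (∃ f : ℕ → ℕ, res f σ.length = σ ∧ f ∈ seqsIn (SRem S (betaOf S σ - 1))) then
    decide (∃ f : ℕ → ℕ, res f σ.length = σ ∧ f ∈ seqsIn (SRem S (betaOf S σ - 1)) ∧ f ∈ S)
  else if h : σ = [] then false
  else GS S σ.dropLast
termination_by σ.length
decreasing_by
  simp only [List.length_dropLast]
  exact Nat.sub_lt (List.length_pos_iff.mpr h) one_pos

/-- `S` is `F_σ`: a countable union of closed sets. -/
def IsFsigma (S : Set (ℕ → ℕ)) : Prop :=
  ∃ C : ℕ → Set (ℕ → ℕ), (∀ n, IsClosed (C n)) ∧ S = ⋃ n, C n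

/-- Boolean combinations of open sets. -/
inductive BoolComb : Set (ℕ → ℕ) → Prop
  | isOpen {s : Set (ℕ → ℕ)} : IsOpen s → BoolComb s
  | compl {s : Set (ℕ → ℕ)} : BoolComb s → BoolComb sᶜ
  | union {s t : Set (ℕ → ℕ)} : BoolComb s → BoolComb t → BoolComb (s ∪ t)

/-- The Borel class `Σ⁰_α` on Baire space (for `α ≥ 1`). -/
noncomputable def Sigma0 (α : Ordinal.{0}) : Set (Set (ℕ → ℕ)) :=
  if α = 1 then {s | IsOpen s}
  else {s | ∃ g : ℕ → Set (ℕ → ℕ), s = ⋃ n, g n ∧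
    ∀ n, ∃ β : {β : Ordinal.{0} // β < α}, 1 ≤ β.1 ∧ (g n)ᶜ ∈ Sigma0 β.1}
termination_by α
decreasing_by exact β.2

/-- The ambiguous Borel class `Δ⁰_α`. -/
noncomputable def Delta0 (α : Ordinal.{0}) : Set (Set (ℕ → ℕ)) :=
  {s | s ∈ Sigma0 α ∧ sᶜ ∈ Sigma0 α}

/-- The Boolean characteristic function. -/
noncomputable def chi (X : Set (ℕ → ℕ)) (f : ℕ → ℕ) : Bool := decide (f ∈ X)

/-- `G` guesses `S` based on the sequence of sets `Ss`. -/
def GuessesBased (G : List Bool → Bool) (Ss : ℕ → Set (ℕ → ℕ)) (S : Set (ℕ → ℕ)) : Prop :=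
  ∀ f : ℕ → ℕ, ∀ᶠ n in atTop,
    (G (List.ofFn (fun i : Fin n => chi (Ss i) f)) = true ↔ f ∈ S)

/-- `S` is `μ`th-order guessable. -/
def HigherGuessable (μ : Ordinal.{0}) (S : Set (ℕ → ℕ)) : Prop :=
  ∃ Ss : ℕ → Set (ℕ → ℕ), (∀ i, ∃ μi, μi < μ ∧ Ss i ∈ Delta0 (μi + 1)) ∧
    ∃ G : List Bool → Bool, GuessesBased G Ss S

/-! Write `S = ⋃ₙ ⋂ₖ Vₙₖ` and `Sᶜ = ⋃ₙ ⋂ₖ Wₙₖ` with all `Vₙₖ, Wₙₖ` of lower ambiguous class, and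
interleave the two families into a single one `Uₘₖ`. Every `f` lies in some `⋂ₖ Uₘₖ`, and the parity
of the least such `m` tells whether `f ∈ S`. The stage-`j` guess `A_j` looks for the least `m ≤ j`
with `f ∈ Uₘₖ` for all `k ≤ j`; this is a finite Boolean combination of the `Uₘₖ`, so of lower
class, and for `j` large enough it finds the true least `m`. Hence `A_j → S` pointwise, which gives
both Kuratowski limits and makes "repeat the last bit" a guesser. -/

theorem exists_isClopen_iUnion_eq {U : Set (ℕ → ℕ)} (hU : IsOpen U) :
    ∃ C : ℕ → Set (ℕ → ℕ), (∀ k, IsClopen (C k)) ∧ U = ⋃ k, C k := by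
  refine ⟨fun k => (fun f (i : Fin k) => f i) ⁻¹'
      {x | ∀ g : ℕ → ℕ, (fun i : Fin k => g i) = x → g ∈ U},
    fun k => (isClopen_discrete _).preimage (by fun_prop), ?_⟩
  ext f
  simp only [Set.mem_iUnion, Set.mem_preimage, Set.mem_ofPred_eq]
  refine ⟨fun hf => ?_, fun ⟨k, hk⟩ => hk f rfl⟩
  obtain ⟨_, ⟨x, k, rfl⟩, hfx, hxU⟩ :=
    (PiNat.isTopologicalBasis_cylinders fun _ => ℕ).mem_nhds_iff.1 (hU.mem_nhds hf)
  refine ⟨k, fun g hg => hxU fun i hi => ?_⟩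
  rw [← PiNat.mem_cylinder_iff.1 hfx i hi]
  exact congrFun hg ⟨i, hi⟩

section BorelClasses

variable {α β γ : Ordinal.{0}} {s t : Set (ℕ → ℕ)}

theorem mem_sigma0_one : s ∈ Sigma0 1 ↔ IsOpen s := by
  rw [Sigma0, if_pos rfl]
  rfl

theorem mem_sigma0_of_ne_one (hα : α ≠ 1) :
    s ∈ Sigma0 α ↔ ∃ g : ℕ → Set (ℕ → ℕ), s = ⋃ n, g n ∧
      ∀ n, ∃ β : {β : Ordinal.{0} // β < α}, 1 ≤ β.1 ∧ (g n)ᶜ ∈ Sigma0 β.1 := by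
  rw [Sigma0, if_neg hα]
  rfl

theorem mem_sigma0_of_compl_mem (hβ : 1 ≤ β) (hβα : β < α) (hs : sᶜ ∈ Sigma0 β) :
    s ∈ Sigma0 α := by
  rw [mem_sigma0_of_ne_one (hβ.trans_lt hβα).ne']
  exact ⟨fun _ => s, (Set.iUnion_const s).symm, fun _ => ⟨⟨β, hβα⟩, hβ, hs⟩⟩

theorem iUnion_mem_sigma0 {ι : Type*} [Countable ι] [Nonempty ι] {F : ι → Set (ℕ → ℕ)}
    (hF : ∀ i, F i ∈ Sigma0 α) : ⋃ i, F i ∈ Sigma0 α := by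
  rcases eq_or_ne α 1 with rfl | hα
  · simp only [mem_sigma0_one] at hF ⊢
    exact isOpen_iUnion hF
  simp only [mem_sigma0_of_ne_one hα] at hF ⊢
  choose g hg hlow using hF
  obtain ⟨e, he⟩ := exists_surjective_nat (ι × ℕ)
  refine ⟨fun n => g (e n).1 (e n).2, ?_, fun n => hlow _ _⟩
  rw [he.iUnion_comp (fun p => g p.1 p.2), Set.iUnion_prod']
  exact Set.iUnion_congr hg

theorem union_mem_sigma0 (hs : s ∈ Sigma0 α) (ht : t ∈ Sigma0 α) : s ∪ t ∈ Sigma0 α := by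
  rw [Set.union_eq_iUnion]
  exact iUnion_mem_sigma0 (Bool.forall_bool.2 ⟨ht, hs⟩)

theorem mem_sigma0_of_isOpen (hα : 1 ≤ α) (hs : IsOpen s) : s ∈ Sigma0 α := by
  rcases hα.eq_or_lt with rfl | hα
  · rwa [mem_sigma0_one]
  obtain ⟨C, hC, rfl⟩ := exists_isClopen_iUnion_eq hs
  refine iUnion_mem_sigma0 fun k => mem_sigma0_of_compl_mem le_rfl hα ?_
  rw [mem_sigma0_one]
  exact (hC k).isClosed.isOpen_compl

theorem sigma0_mono (hα : 1 ≤ α) (hαγ : α ≤ γ) : Sigma0 α ⊆ Sigma0 γ := by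
  intro s hs
  rcases hα.eq_or_lt with rfl | hα
  · rw [mem_sigma0_one] at hs
    exact mem_sigma0_of_isOpen hαγ hs
  rw [mem_sigma0_of_ne_one hα.ne'] at hs
  obtain ⟨g, rfl, hg⟩ := hs
  refine iUnion_mem_sigma0 fun n => ?_
  obtain ⟨β, hβ, hgβ⟩ := hg n
  exact mem_sigma0_of_compl_mem hβ (β.2.trans_le hαγ) hgβ

theorem inter_mem_sigma0 (hα : 1 ≤ α) (hs : s ∈ Sigma0 α) (ht : t ∈ Sigma0 α) :
    s ∩ t ∈ Sigma0 α := by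
  rcases hα.eq_or_lt with rfl | hα
  · rw [mem_sigma0_one] at hs ht ⊢
    exact hs.inter ht
  rw [mem_sigma0_of_ne_one hα.ne'] at hs ht
  obtain ⟨g, rfl, hg⟩ := hs
  obtain ⟨h, rfl, hh⟩ := ht
  rw [Set.iUnion_inter_iUnion]
  refine iUnion_mem_sigma0 fun a => iUnion_mem_sigma0 fun b => ?_
  obtain ⟨β, hβ, hgβ⟩ := hg a
  obtain ⟨γ, hγ, hhγ⟩ := hh b
  refine mem_sigma0_of_compl_mem (le_max_of_le_left hβ) (max_lt β.2 γ.2) ?_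
  rw [Set.compl_inter]
  exact union_mem_sigma0 (sigma0_mono hβ (le_max_left _ _) hgβ)
    (sigma0_mono hγ (le_max_right _ _) hhγ)

theorem compl_mem_delta0 (hs : s ∈ Delta0 α) : sᶜ ∈ Delta0 α :=
  ⟨hs.2, (compl_compl s).symm ▸ hs.1⟩

theorem union_mem_delta0 (hα : 1 ≤ α) (hs : s ∈ Delta0 α) (ht : t ∈ Delta0 α) :
    s ∪ t ∈ Delta0 α :=
  ⟨union_mem_sigma0 hs.1 ht.1, Set.compl_union s t ▸ inter_mem_sigma0 hα hs.2 ht.2⟩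

theorem inter_mem_delta0 (hα : 1 ≤ α) (hs : s ∈ Delta0 α) (ht : t ∈ Delta0 α) :
    s ∩ t ∈ Delta0 α := by
  simpa using compl_mem_delta0 (union_mem_delta0 hα (compl_mem_delta0 hs) (compl_mem_delta0 ht))

theorem delta0_mono (hα : 1 ≤ α) (hαγ : α ≤ γ) : Delta0 α ⊆ Delta0 γ :=
  fun _ hs => ⟨sigma0_mono hα hαγ hs.1, sigma0_mono hα hαγ hs.2⟩

theorem IsClopen.mem_delta0_one (hs : IsClopen s) : s ∈ Delta0 1 :=
  ⟨mem_sigma0_one.2 hs.isOpen, mem_sigma0_one.2 hs.isClosed.isOpen_compl⟩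

theorem biUnion_mem_delta0 {ι : Type*} (hα : 1 ≤ α) (I : Finset ι) {F : ι → Set (ℕ → ℕ)}
    (hF : ∀ i ∈ I, F i ∈ Delta0 α) : ⋃ i ∈ I, F i ∈ Delta0 α := by
  induction I using Finset.induction_on with
  | empty =>
    simpa using delta0_mono le_rfl hα isClopen_empty.mem_delta0_one
  | insert i I _ ih =>
    rw [Finset.set_biUnion_insert]
    exact union_mem_delta0 hα (hF i (Finset.mem_insert_self i I))
      (ih fun j hj => hF j (Finset.mem_insert_of_mem hj))

theorem biInter_mem_delta0 {ι : Type*} (hα : 1 ≤ α) (I : Finset ι) {F : ι → Set (ℕ → ℕ)}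
    (hF : ∀ i ∈ I, F i ∈ Delta0 α) : ⋂ i ∈ I, F i ∈ Delta0 α := by
  simpa using compl_mem_delta0 (biUnion_mem_delta0 hα I fun i hi => compl_mem_delta0 (hF i hi))

theorem mem_delta0_succ_of_mem_sigma0 (hγ : 1 ≤ γ) (hs : s ∈ Sigma0 γ) : s ∈ Delta0 (γ + 1) :=
  ⟨sigma0_mono hγ le_self_add hs, mem_sigma0_of_compl_mem hγ (lt_add_one γ) (by rwa [compl_compl])⟩

theorem exists_iUnion_delta0_of_mem_sigma0 (hβ : 1 ≤ β) (ht : t ∈ Sigma0 β) :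
    ∃ W : ℕ → Set (ℕ → ℕ), (∀ k, ∃ δ < β, W k ∈ Delta0 (δ + 1)) ∧ t = ⋃ k, W k := by
  rcases hβ.eq_or_lt with rfl | hβ
  · rw [mem_sigma0_one] at ht
    obtain ⟨C, hC, rfl⟩ := exists_isClopen_iUnion_eq ht
    exact ⟨C, fun k => ⟨0, zero_lt_one, by simpa using (hC k).mem_delta0_one⟩, rfl⟩
  rw [mem_sigma0_of_ne_one hβ.ne'] at ht
  obtain ⟨g, rfl, hg⟩ := ht
  refine ⟨g, fun k => ?_, rfl⟩
  obtain ⟨γ, hγ, hgγ⟩ := hg k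
  exact ⟨γ, γ.2, by simpa using compl_mem_delta0 (mem_delta0_succ_of_mem_sigma0 hγ hgγ)⟩

theorem exists_iUnion_iInter_delta0_of_mem_sigma0_succ {μ : Ordinal.{0}} (hμ : 1 ≤ μ)
    (hs : s ∈ Sigma0 (μ + 1)) :
    ∃ V : ℕ → ℕ → Set (ℕ → ℕ), (∀ n k, ∃ δ < μ, V n k ∈ Delta0 (δ + 1)) ∧
      s = ⋃ n, ⋂ k, V n k := by
  rw [mem_sigma0_of_ne_one (hμ.trans_lt (lt_add_one μ)).ne'] at hs
  obtain ⟨g, rfl, hg⟩ := hs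
  have hpi : ∀ n, ∃ W : ℕ → Set (ℕ → ℕ), (∀ k, ∃ δ < μ, W k ∈ Delta0 (δ + 1)) ∧
      g n = ⋂ k, W k := by
    intro n
    obtain ⟨β, hβ, hgβ⟩ := hg n
    obtain ⟨W, hW, hWeq⟩ := exists_iUnion_delta0_of_mem_sigma0 hβ hgβ
    refine ⟨fun k => (W k)ᶜ, fun k => ?_, by rw [← Set.compl_iUnion, ← hWeq, compl_compl]⟩
    obtain ⟨δ, hδ, hWδ⟩ := hW k
    exact ⟨δ, hδ.trans_le (Order.lt_add_one_iff.1 β.2), compl_mem_delta0 hWδ⟩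
  choose V hV hVeq using hpi
  exact ⟨V, hV, Set.iUnion_congr hVeq⟩

theorem exists_lt_forall_mem_delta0_succ {ι : Type*} {μ : Ordinal.{0}} (hμ : 0 < μ)
    {F : ι → Set (ℕ → ℕ)} (hF : ∀ i, ∃ δ < μ, F i ∈ Delta0 (δ + 1)) (I : Finset ι) :
    ∃ δ < μ, ∀ i ∈ I, F i ∈ Delta0 (δ + 1) := by
  choose d hdμ hd using hF
  refine ⟨I.sup d, (Finset.sup_lt_iff (Ordinal.bot_eq_zero ▸ hμ)).2 fun i _ => hdμ i,
    fun i hi => delta0_mono le_add_self ?_ (hd i)⟩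
  gcongr
  exact Finset.le_sup hi

end BorelClasses

section Kuratowski

variable {X : Type*} (p : ℕ → Prop) (U : ℕ → ℕ → Set X)

def truncInter (m j : ℕ) : Set X := ⋂ k ∈ Finset.range (j + 1), U m k

/-- `x ∈ kuratowskiApprox p U j` iff the least `m ≤ j` with `x ∈ U m k` for all `k ≤ j`
exists and satisfies `p`. -/
def kuratowskiApprox (j : ℕ) : Set X :=
  ⋃ m ∈ (Finset.range (j + 1)).filter p,
    truncInter U m j ∩ ⋂ m' ∈ Finset.range m, (truncInter U m' j)ᶜ

variable {p U}

theorem eventually_mem_kuratowskiApprox_iff {x : X} {m₀ : ℕ} (hm₀ : ∀ k, x ∈ U m₀ k)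
    (hmin : ∀ m < m₀, ∃ k, x ∉ U m k) :
    ∀ᶠ j in atTop, (x ∈ kuratowskiApprox p U j ↔ p m₀) := by
  have hbelow : ∀ᶠ j in atTop, ∀ m ∈ Finset.range m₀, x ∉ truncInter U m j := by
    rw [eventually_all_finset]
    intro m hm
    obtain ⟨k, hk⟩ := hmin m (Finset.mem_range.1 hm)
    filter_upwards [eventually_ge_atTop k] with j hj hx
    exact hk (Set.mem_iInter₂.1 hx k (Finset.mem_range_succ_iff.2 hj))
  filter_upwards [hbelow, eventually_ge_atTop m₀] with j hbelow hj
  have hin : x ∈ truncInter U m₀ j := Set.mem_iInter₂.2 fun k _ => hm₀ k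
  simp only [kuratowskiApprox, Set.mem_iUnion₂, Set.mem_inter_iff, Set.mem_iInter₂,
    Set.mem_compl_iff, Finset.mem_filter, Finset.mem_range_succ_iff, exists_prop]
  constructor
  · rintro ⟨m, ⟨-, hpm⟩, hxm, hfirst⟩
    obtain rfl : m = m₀ := le_antisymm
      (not_lt.1 fun h => hfirst m₀ (Finset.mem_range.2 h) hin)
      (not_lt.1 fun h => hbelow m (Finset.mem_range.2 h) hxm)
    exact hpm
  · exact fun hp => ⟨m₀, ⟨hj, hp⟩, hin, hbelow⟩

theorem eventually_mem_kuratowskiApprox_iff_mem {S : Set X}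
    (hcover : ∀ x, ∃ m, ∀ k, x ∈ U m k) (hp : ∀ m x, (∀ k, x ∈ U m k) → (p m ↔ x ∈ S))
    (x : X) : ∀ᶠ j in atTop, (x ∈ kuratowskiApprox p U j ↔ x ∈ S) := by
  have hm₀ := Nat.find_spec (hcover x)
  refine (eventually_mem_kuratowskiApprox_iff hm₀ fun m hm => ?_).mono
    fun j hj => hj.trans (hp _ x hm₀)
  exact not_forall.1 (Nat.find_min (hcover x) hm)

/-- Merges two doubly indexed families, `V n` at index `2n` and `W n` at `2n + 1`. -/
def interleave (V W : ℕ → ℕ → Set X) (m : ℕ) : ℕ → Set X :=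
  Sum.elim V W (Equiv.natSumNatEquivNat.symm m)

theorem eventually_mem_kuratowskiApprox_interleave_iff {S : Set X} {V W : ℕ → ℕ → Set X}
    (hV : S = ⋃ n, ⋂ k, V n k) (hW : Sᶜ = ⋃ n, ⋂ k, W n k) (x : X) :
    ∀ᶠ j in atTop, (x ∈ kuratowskiApprox (fun m => (Equiv.natSumNatEquivNat.symm m).isLeft)
      (interleave V W) j ↔ x ∈ S) := by
  refine eventually_mem_kuratowskiApprox_iff_mem (fun x => ?_) (fun m x hm => ?_) x
  · by_cases hx : x ∈ S
    · obtain ⟨n, hn⟩ := Set.mem_iUnion.1 (hV ▸ hx)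
      exact ⟨Equiv.natSumNatEquivNat (.inl n), by simpa [interleave] using hn⟩
    · rw [← Set.mem_compl_iff, hW] at hx
      obtain ⟨n, hn⟩ := Set.mem_iUnion.1 hx
      exact ⟨Equiv.natSumNatEquivNat (.inr n), by simpa [interleave] using hn⟩
  · rcases h : Equiv.natSumNatEquivNat.symm m with n | n <;>
      simp only [interleave, h, Sum.elim_inl, Sum.elim_inr] at hm
    · simpa [hV] using ⟨n, hm⟩
    · simpa [← Set.mem_compl_iff, hW] using ⟨n, hm⟩

theorem forall_interleave {P : Set X → Prop} {V W : ℕ → ℕ → Set X} (hV : ∀ n k, P (V n k))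
    (hW : ∀ n k, P (W n k)) (m k : ℕ) : P (interleave V W m k) := by
  unfold interleave
  cases Equiv.natSumNatEquivNat.symm m with
  | inl n => exact hV n k
  | inr n => exact hW n k

theorem eq_liminf_and_limsup_of_eventually_mem_iff {A : ℕ → Set X} {S : Set X}
    (h : ∀ x, ∀ᶠ j in atTop, (x ∈ A j ↔ x ∈ S)) :
    S = ⋃ n, ⋂ m, ⋂ (_ : n ≤ m), A m ∧ S = ⋂ n, ⋃ m, ⋃ (_ : n ≤ m), A m := by
  constructor
  · refine Eq.trans ?_ liminf_eq_iSup_iInf_of_nat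
    ext x
    rw [mem_liminf_iff_eventually_mem, eventually_congr (h x), eventually_const]
  · refine Eq.trans ?_ limsup_eq_iInf_iSup_of_nat
    ext x
    rw [mem_limsup_iff_frequently_mem, frequently_congr (h x), frequently_const]

end Kuratowski

theorem kuratowskiApprox_mem_delta0 (p : ℕ → Prop) {U : ℕ → ℕ → Set (ℕ → ℕ)}
    {α : Ordinal.{0}} (hα : 1 ≤ α) {j : ℕ} (hU : ∀ m ≤ j, ∀ k ≤ j, U m k ∈ Delta0 α) :
    kuratowskiApprox p U j ∈ Delta0 α := by
  have htrunc : ∀ m ≤ j, truncInter U m j ∈ Delta0 α := fun m hm =>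
    biInter_mem_delta0 hα _ fun k hk => hU m hm k (Finset.mem_range_succ_iff.1 hk)
  refine biUnion_mem_delta0 hα _ fun m hm => ?_
  have hmj : m ≤ j := Finset.mem_range_succ_iff.1 (Finset.mem_filter.1 hm).1
  exact inter_mem_delta0 hα (htrunc m hmj) (biInter_mem_delta0 hα _ fun m' hm' =>
    compl_mem_delta0 (htrunc m' ((Finset.mem_range.1 hm').le.trans hmj)))

theorem exists_kuratowskiApprox_mem_delta0_succ (p : ℕ → Prop) {U : ℕ → ℕ → Set (ℕ → ℕ)}
    {μ : Ordinal.{0}} (hμ : 1 ≤ μ) (hU : ∀ m k, ∃ δ < μ, U m k ∈ Delta0 (δ + 1)) (j : ℕ) :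
    ∃ δ < μ, kuratowskiApprox p U j ∈ Delta0 (δ + 1) := by
  obtain ⟨δ, hδ, hUδ⟩ := exists_lt_forall_mem_delta0_succ (zero_lt_one.trans_le hμ)
    (F := fun mk : ℕ × ℕ => U mk.1 mk.2) (fun mk => hU mk.1 mk.2)
    (Finset.range (j + 1) ×ˢ Finset.range (j + 1))
  refine ⟨δ, hδ, kuratowskiApprox_mem_delta0 p le_add_self fun m hm k hk => hUδ (m, k) ?_⟩
  simp [hm, hk]

theorem guessesBased_getLastD_of_eventually_mem_iff {A : ℕ → Set (ℕ → ℕ)} {S : Set (ℕ → ℕ)}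
    (h : ∀ f, ∀ᶠ j in atTop, (f ∈ A j ↔ f ∈ S)) :
    GuessesBased (fun l => l.getLastD false) A S := by
  intro f
  obtain ⟨N, hN⟩ := eventually_atTop.1 (h f)
  refine eventually_atTop.2 ⟨N + 1, fun n hn => ?_⟩
  obtain ⟨j, rfl⟩ : ∃ j, n = j + 1 := ⟨n - 1, by omega⟩
  rw [List.ofFn_succ']
  simpa [chi] using hN j (by omega)

theorem stmt15_general (μ : Ordinal.{0}) (h1 : 1 ≤ μ)
    (S : Set (ℕ → ℕ)) (hS : S ∈ Delta0 (μ + 1)) :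
    HigherGuessable μ S ∧
    ∃ A : ℕ → Set (ℕ → ℕ), (∀ i, ∃ μi, μi < μ ∧ A i ∈ Delta0 (μi + 1)) ∧
      (S = ⋃ n, ⋂ m, ⋂ (_ : n ≤ m), A m) ∧
      (S = ⋂ n, ⋃ m, ⋃ (_ : n ≤ m), A m) ∧
      GuessesBased (fun l => l.getLastD false) A S := by
  obtain ⟨V, hV, hSV⟩ := exists_iUnion_iInter_delta0_of_mem_sigma0_succ h1 hS.1
  obtain ⟨W, hW, hSW⟩ := exists_iUnion_iInter_delta0_of_mem_sigma0_succ h1 hS.2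
  set A := kuratowskiApprox (fun m => (Equiv.natSumNatEquivNat.symm m).isLeft) (interleave V W)
  have hA : ∀ j, ∃ δ < μ, A j ∈ Delta0 (δ + 1) :=
    exists_kuratowskiApprox_mem_delta0_succ _ h1
      (forall_interleave (P := fun s => ∃ δ < μ, s ∈ Delta0 (δ + 1)) hV hW)
  have hlim := eventually_mem_kuratowskiApprox_interleave_iff hSV hSW
  have hguess := guessesBased_getLastD_of_eventually_mem_iff hlim
  obtain ⟨hliminf, hlimsup⟩ := eq_liminf_and_limsup_of_eventually_mem_iff hlim
  exact ⟨⟨A, hA, _, hguess⟩, A, hA, hliminf, hlimsup, hguess⟩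

theorem stmt15 (μ : Ordinal.{0}) (h1 : 1 ≤ μ) (h2 : μ < (Cardinal.aleph 1).ord)
    (S : Set (ℕ → ℕ)) (hS : S ∈ Delta0 (μ + 1)) :
    HigherGuessable μ S ∧
    ∃ A : ℕ → Set (ℕ → ℕ), (∀ i, ∃ μi, μi < μ ∧ A i ∈ Delta0 (μi + 1)) ∧
      (S = ⋃ n, ⋂ m, ⋂ (_ : n ≤ m), A m) ∧
      (S = ⋂ n, ⋃ m, ⋃ (_ : n ≤ m), A m) ∧
      GuessesBased (fun l => l.getLastD false) A S :=
  stmt15_general μ h1 S hS
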